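/- Let $Y \in \mathbb{R}^{m \times n}$ and let $\widehat{V}_r \in \mathbb{O}^{n \times r}$ be the top $r$ right singular vectors of $Y$. Let $V = [V_r \ V_\perp] \in \mathbb{O}^{n \times n}$ be any orthogonal matrix with $V_r \in \mathbb{O}^{n \times r}$. If $\sigma_r(Y V_r) > \sigma_{r+1}(Y)$, then $\|\sin\Theta(V_r, \widehat{V}_r)\| \le \min\left\{\frac{\sigma_r(Y V_r)\,\|\mathcal{P}_{Y V_r} Y V_\perp\|}{\sigma_r^2(Y V_r) - \sigma_{r+1}^2(Y)},\ 1\right\}$, where $\mathcal{P}_A$ denotes orthogonal projection onto the column space of $A$. -/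

import Mathlib

open Matrix BigOperators Finset

/-- The `i`-th largest singular value (0-indexed) of a real matrix. -/
noncomputable def sv {m n : Type*} [Fintype m] [Fintype n] [DecidableEq n]
    (M : Matrix m n ℝ) (i : ℕ) : ℝ :=
  if hi : i < Fintype.card n then
    let ev : Fin (Fintype.card n) → ℝ :=
      (show (Mᵀ * M).IsHermitian by
        simpa using Matrix.isHermitian_conjTranspose_mul_self M).eigenvalues ∘ (Fintype.equivFin n).symm
    Real.sqrt ((ev ∘ Tuple.sort ev) (Fin.rev ⟨i, hi⟩))
  else 0

/-- Operator norm of the `sinΘ` matrix between the column spans of `U`, `Uhat`. -/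
noncomputable def sinThetaOp {p r : ℕ} (U Uhat : Matrix (Fin p) (Fin r) ℝ) : ℝ :=
  Real.sqrt (1 - sv (Uᵀ * Uhat) (r - 1) ^ 2)

lemma Matrix.isHermitian_transpose_mul_self {m n : Type*} [Fintype m] [Fintype n]
    (M : Matrix m n ℝ) : (Mᵀ * M).IsHermitian := by
  simpa using Matrix.isHermitian_conjTranspose_mul_self M

namespace CZ

noncomputable def NN {k : ℕ} (v : Fin k → ℝ) : ℝ := Real.sqrt (v ⬝ᵥ v)

lemma dot_self_nonneg {k : ℕ} (v : Fin k → ℝ) : 0 ≤ v ⬝ᵥ v :=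
  Finset.sum_nonneg fun _ _ => mul_self_nonneg _

lemma NN_nonneg {k : ℕ} (v : Fin k → ℝ) : 0 ≤ NN v := Real.sqrt_nonneg _

lemma NN_sq {k : ℕ} (v : Fin k → ℝ) : NN v ^ 2 = v ⬝ᵥ v := Real.sq_sqrt (dot_self_nonneg v)

lemma le_NN_of_sq {k : ℕ} {v : Fin k → ℝ} {c : ℝ} (hc : 0 ≤ c) (h : v ⬝ᵥ v ≤ c ^ 2) :
    NN v ≤ c := le_of_sq_le_sq (by rw [NN_sq]; exact h) hc

lemma NN_le_of_sq_le_sq {k : ℕ} {v : Fin k → ℝ} {c : ℝ} (hc : 0 ≤ c) (h : v ⬝ᵥ v ≤ c ^ 2) :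
    NN v ≤ c := le_NN_of_sq hc h

lemma NN_eq_zero {k : ℕ} {v : Fin k → ℝ} (h : NN v = 0) : v = 0 := by
  have h2 : v ⬝ᵥ v = 0 := by
    have := NN_sq v; rw [h] at this; simpa using this.symm
  exact dotProduct_self_eq_zero.mp h2

lemma dot_le_NN {k : ℕ} (v w : Fin k → ℝ) : v ⬝ᵥ w ≤ NN v * NN w := by
  have h := Finset.sum_mul_sq_le_sq_mul_sq Finset.univ v w
  have h2 : (v ⬝ᵥ w) ^ 2 ≤ (NN v * NN w) ^ 2 := by
    rw [mul_pow, NN_sq, NN_sq]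
    simpa [dotProduct, pow_two, mul_comm, mul_left_comm] using h
  exact le_of_sq_le_sq h2 (mul_nonneg (NN_nonneg v) (NN_nonneg w))

lemma NN_triangle {k : ℕ} (v w : Fin k → ℝ) : NN (v + w) ≤ NN v + NN w := by
  refine le_NN_of_sq (add_nonneg (NN_nonneg v) (NN_nonneg w)) ?_
  have h : (v + w) ⬝ᵥ (v + w) = v ⬝ᵥ v + 2 * (v ⬝ᵥ w) + w ⬝ᵥ w := by
    rw [add_dotProduct, dotProduct_add, dotProduct_add, dotProduct_comm w v]; ring
  have := dot_le_NN v w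
  rw [h]
  have h1 := NN_sq v; have h2 := NN_sq w
  nlinarith [this]

lemma NN_sub_le {k : ℕ} (v w : Fin k → ℝ) : NN (v - w) ≤ NN v + NN w := by
  have h : NN (-w) = NN w := by
    unfold NN; rw [neg_dotProduct, dotProduct_neg, neg_neg]
  calc NN (v - w) = NN (v + -w) := by rw [sub_eq_add_neg]
    _ ≤ NN v + NN (-w) := NN_triangle v (-w)
    _ = NN v + NN w := by rw [h]

/-- Gram identity. -/
lemma gram_dot {a b : ℕ} (M : Matrix (Fin a) (Fin b) ℝ) (x : Fin b → ℝ) :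
    (M *ᵥ x) ⬝ᵥ (M *ᵥ x) = x ⬝ᵥ ((Mᵀ * M) *ᵥ x) := by
  rw [← mulVec_mulVec]
  conv_rhs => rw [dotProduct_mulVec, vecMul_transpose]

lemma isometry_dot {a b : ℕ} {U : Matrix (Fin a) (Fin b) ℝ} (hU : Uᵀ * U = 1)
    (x : Fin b → ℝ) : (U *ᵥ x) ⬝ᵥ (U *ᵥ x) = x ⬝ᵥ x := by
  rw [gram_dot, hU, one_mulVec]

section spectral
variable {a b : ℕ} (M : Matrix (Fin a) (Fin b) ℝ)

noncomputable def lam (j : Fin b) : ℝ :=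
  (Matrix.isHermitian_transpose_mul_self M).eigenvalues j

lemma lam_nonneg (j : Fin b) : 0 ≤ lam M j :=
  Matrix.eigenvalues_conjTranspose_mul_self_nonneg M j

noncomputable def ev : Fin (Fintype.card (Fin b)) → ℝ :=
  (Matrix.isHermitian_transpose_mul_self M).eigenvalues ∘ (Fintype.equivFin (Fin b)).symm

lemma sv_dif {i : ℕ} (hi : i < Fintype.card (Fin b)) :
    sv M i = Real.sqrt ((ev M ∘ Tuple.sort (ev M)) (Fin.rev ⟨i, hi⟩)) := by
  unfold sv
  rw [dif_pos hi]
  rfl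

lemma ev_nonneg (k) : 0 ≤ ev M k := lam_nonneg M _

lemma sv_nonneg {mm nn : Type*} [Fintype mm] [Fintype nn] [DecidableEq nn]
    (A : Matrix mm nn ℝ) (i : ℕ) : 0 ≤ sv A i := by
  unfold sv
  split
  · exact Real.sqrt_nonneg _
  · exact le_refl 0

lemma ev_eq_sorted (k : Fin (Fintype.card (Fin b))) :
    ev M k = (ev M ∘ Tuple.sort (ev M)) ((Tuple.sort (ev M)).symm k) := by
  simp

lemma lam_eq_ev (j : Fin b) : lam M j = ev M (Fintype.equivFin (Fin b) j) := by
  simp [lam, ev]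

lemma sv_anti {i j : ℕ} (hij : i ≤ j) : sv M j ≤ sv M i := by
  by_cases hj : j < Fintype.card (Fin b)
  · have hi : i < Fintype.card (Fin b) := lt_of_le_of_lt hij hj
    rw [sv_dif M hj, sv_dif M hi]
    apply Real.sqrt_le_sqrt
    apply Tuple.monotone_sort (ev M)
    rw [Fin.le_def, Fin.val_rev, Fin.val_rev]
    simp only []
    omega
  · rw [show sv M j = 0 from dif_neg hj]
    exact sv_nonneg M i

lemma sv_zero_spec (hb : 0 < b) :
    (∃ j : Fin b, lam M j = sv M 0 ^ 2) ∧ ∀ j : Fin b, lam M j ≤ sv M 0 ^ 2 := by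
  have hc : (0 : ℕ) < Fintype.card (Fin b) := by simp [hb]
  have hsv := sv_dif M hc
  set g := ev M ∘ Tuple.sort (ev M) with hg
  have hmono := Tuple.monotone_sort (ev M)
  have htoprev : ∀ k : Fin (Fintype.card (Fin b)), k ≤ Fin.rev ⟨0, hc⟩ := by
    intro k
    rw [Fin.le_def, Fin.val_rev]
    have hk := k.isLt
    simp only [Fin.val_mk, Fintype.card_fin] at *
    omega
  have hsq : sv M 0 ^ 2 = g (Fin.rev ⟨0, hc⟩) := by
    rw [hsv]
    exact Real.sq_sqrt (ev_nonneg M _)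
  constructor
  · refine ⟨(Fintype.equivFin (Fin b)).symm (Tuple.sort (ev M) (Fin.rev ⟨0, hc⟩)), ?_⟩
    rw [hsq]
    simp [lam, ev, g]
  · intro j
    rw [hsq, lam_eq_ev, ev_eq_sorted]
    exact hmono (htoprev _)

lemma sv_last_spec (hb : 0 < b) :
    (∃ j : Fin b, lam M j = sv M (b - 1) ^ 2) ∧ ∀ j : Fin b, sv M (b - 1) ^ 2 ≤ lam M j := by
  have hc : b - 1 < Fintype.card (Fin b) := by simp; omega
  have hsv := sv_dif M hc
  set g := ev M ∘ Tuple.sort (ev M) with hg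
  have hmono := Tuple.monotone_sort (ev M)
  have hbotle : ∀ k : Fin (Fintype.card (Fin b)), Fin.rev ⟨b - 1, hc⟩ ≤ k := by
    intro k
    rw [Fin.le_def, Fin.val_rev]
    have hk := k.isLt
    simp only [Fin.val_mk, Fintype.card_fin] at *
    omega
  have hsq : sv M (b - 1) ^ 2 = g (Fin.rev ⟨b - 1, hc⟩) := by
    rw [hsv]
    exact Real.sq_sqrt (ev_nonneg M _)
  constructor
  · refine ⟨(Fintype.equivFin (Fin b)).symm (Tuple.sort (ev M) (Fin.rev ⟨b - 1, hc⟩)), ?_⟩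
    rw [hsq]
    simp [lam, ev, g]
  · intro j
    rw [hsq, lam_eq_ev, ev_eq_sorted]
    exact hmono (hbotle _)

lemma eig_unit (j : Fin b) :
    ⇑((Matrix.isHermitian_transpose_mul_self M).eigenvectorBasis j) ⬝ᵥ
      ⇑((Matrix.isHermitian_transpose_mul_self M).eigenvectorBasis j) = 1 := by
  set B := (Matrix.isHermitian_transpose_mul_self M).eigenvectorBasis
  have h1 : ‖B j‖ = 1 := B.orthonormal.1 j
  have h2 : ‖B j‖ ^ 2 = ∑ i, (B j) i ^ 2 := by
    rw [EuclideanSpace.norm_eq, Real.sq_sqrt (Finset.sum_nonneg fun _ _ => sq_nonneg _)]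
    simp [sq_abs]
  rw [h1] at h2
  simp only [dotProduct, ← pow_two]
  rw [← h2]
  norm_num

lemma eig_eq (j : Fin b) :
    (Mᵀ * M) *ᵥ ⇑((Matrix.isHermitian_transpose_mul_self M).eigenvectorBasis j) =
      lam M j • ⇑((Matrix.isHermitian_transpose_mul_self M).eigenvectorBasis j) := by
  have hMT : Mᵀ * M = Mᴴ * M := by
    rw [Matrix.conjTranspose_eq_transpose_of_trivial]
  exact (Matrix.isHermitian_transpose_mul_self M).mulVec_eigenvectorBasis j

lemma exists_unit_eig_sv0 (hb : 0 < b) :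
    ∃ u : Fin b → ℝ, u ⬝ᵥ u = 1 ∧ (Mᵀ * M) *ᵥ u = sv M 0 ^ 2 • u := by
  obtain ⟨j, hj⟩ := (sv_zero_spec M hb).1
  exact ⟨_, eig_unit M j, by rw [eig_eq, hj]⟩

lemma exists_unit_eig_svlast (hb : 0 < b) :
    ∃ u : Fin b → ℝ, u ⬝ᵥ u = 1 ∧ (Mᵀ * M) *ᵥ u = sv M (b - 1) ^ 2 • u := by
  obtain ⟨j, hj⟩ := (sv_last_spec M hb).1
  exact ⟨_, eig_unit M j, by rw [eig_eq, hj]⟩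



noncomputable def co (x : Fin b → ℝ) (j : Fin b) : ℝ :=
  (Matrix.isHermitian_transpose_mul_self M).eigenvectorBasis.repr
    ((WithLp.equiv 2 (Fin b → ℝ)).symm x) j

lemma eu_norm_sq {k : ℕ} (z : EuclideanSpace ℝ (Fin k)) : ‖z‖ ^ 2 = ∑ j, z j ^ 2 := by
  rw [EuclideanSpace.norm_eq, Real.sq_sqrt (Finset.sum_nonneg fun _ _ => sq_nonneg _)]
  simp [sq_abs]

lemma dot_repr (x : Fin b → ℝ) : x ⬝ᵥ x = ∑ j, co M x j ^ 2 := by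
  classical
  set hA := Matrix.isHermitian_transpose_mul_self M
  set x' : EuclideanSpace ℝ (Fin b) := (WithLp.equiv 2 (Fin b → ℝ)).symm x with hx'
  have h1 : x ⬝ᵥ x = ‖x'‖ ^ 2 := by
    rw [eu_norm_sq]
    simp [dotProduct, x', pow_two]
  have h2 : ‖x'‖ = ‖hA.eigenvectorBasis.repr x'‖ := (hA.eigenvectorBasis.repr.norm_map x').symm
  rw [h1, h2, eu_norm_sq]
  rfl

lemma quad_repr (x : Fin b → ℝ) :
    (M *ᵥ x) ⬝ᵥ (M *ᵥ x) = ∑ j, lam M j * co M x j ^ 2 := by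
  classical
  set hA := Matrix.isHermitian_transpose_mul_self M with hhA
  set B := hA.eigenvectorBasis with hB
  set x' : EuclideanSpace ℝ (Fin b) := (WithLp.equiv 2 (Fin b → ℝ)).symm x with hx'
  have hMT : Mᵀ * M = Mᴴ * M := by
    rw [Matrix.conjTranspose_eq_transpose_of_trivial]
  have hgram : (M *ᵥ x) ⬝ᵥ (M *ᵥ x) = x ⬝ᵥ ((Mᵀ * M) *ᵥ x) := by
    rw [← mulVec_mulVec]
    conv_rhs => rw [dotProduct_mulVec, vecMul_transpose]
  set T : EuclideanSpace ℝ (Fin b) →ₗ[ℝ] EuclideanSpace ℝ (Fin b) :=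
    Matrix.toEuclideanLin (Mᴴ * M) with hT
  have hinner : x ⬝ᵥ ((Mᵀ * M) *ᵥ x) = (inner ℝ x' (T x') : ℝ) := by
    rw [hMT]
    rw [PiLp.inner_apply]
    simp [T, Matrix.toEuclideanLin_apply, x', dotProduct, mul_comm]
  have hTB : ∀ j, T (B j) = lam M j • B j := by
    intro j
    have h := hA.mulVec_eigenvectorBasis j
    apply (WithLp.equiv 2 (Fin b → ℝ)).injective
    funext i
    have := congrFun h i
    simpa [T, Matrix.toEuclideanLin_apply, lam] using this
  have hsum : T x' = ∑ j, (co M x j * lam M j) • B j := by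
    conv_lhs => rw [← B.sum_repr x']
    rw [map_sum]
    refine Finset.sum_congr rfl fun j _ => ?_
    rw [_root_.map_smul, hTB j, smul_smul]
    rfl
  have hco : ∀ j, (inner ℝ x' (B j) : ℝ) = co M x j := by
    intro j
    rw [real_inner_comm, ← OrthonormalBasis.repr_apply_apply]
    rfl
  rw [hgram, hinner, hsum, inner_sum]
  refine Finset.sum_congr rfl fun j _ => ?_
  rw [real_inner_smul_right, hco]
  ring

lemma rayleigh_le (x : Fin b → ℝ) :
    (M *ᵥ x) ⬝ᵥ (M *ᵥ x) ≤ sv M 0 ^ 2 * (x ⬝ᵥ x) := by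
  rcases Nat.eq_zero_or_pos b with hb | hb
  · subst hb
    have hx : x ⬝ᵥ x = 0 := by simp [dotProduct]
    have hmx : M *ᵥ x = 0 := by
      funext i; simp [Matrix.mulVec, dotProduct]
    rw [hx, hmx]
    simp
  · rw [quad_repr, dot_repr, Finset.mul_sum]
    refine Finset.sum_le_sum fun j _ => ?_
    exact mul_le_mul_of_nonneg_right ((sv_zero_spec M hb).2 j) (sq_nonneg _)

lemma rayleigh_ge (x : Fin b → ℝ) :
    sv M (b - 1) ^ 2 * (x ⬝ᵥ x) ≤ (M *ᵥ x) ⬝ᵥ (M *ᵥ x) := by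
  rcases Nat.eq_zero_or_pos b with hb | hb
  · subst hb
    have hx : x ⬝ᵥ x = 0 := by simp [dotProduct]
    have hmx : M *ᵥ x = 0 := by
      funext i; simp [Matrix.mulVec, dotProduct]
    rw [hx, hmx]
    simp
  · rw [quad_repr, dot_repr, Finset.mul_sum]
    refine Finset.sum_le_sum fun j _ => ?_
    exact mul_le_mul_of_nonneg_right ((sv_last_spec M hb).2 j) (sq_nonneg _)

lemma NN_mulVec_le (x : Fin b → ℝ) : NN (M *ᵥ x) ≤ sv M 0 * NN x := by
  refine le_NN_of_sq (mul_nonneg (sv_nonneg M 0) (NN_nonneg x)) ?_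
  rw [mul_pow, NN_sq]
  exact rayleigh_le M x

lemma NN_mulVec_ge (x : Fin b → ℝ) : sv M (b - 1) * NN x ≤ NN (M *ᵥ x) := by
  refine le_of_sq_le_sq ?_ (NN_nonneg _)
  rw [mul_pow, NN_sq, NN_sq]
  exact rayleigh_ge M x

lemma NN_transpose_mulVec_le (z : Fin a → ℝ) : NN (Mᵀ *ᵥ z) ≤ sv M 0 * NN z := by
  set y := Mᵀ *ᵥ z with hy
  rcases eq_or_ne (NN y) 0 with h0 | h0
  · rw [h0]
    exact mul_nonneg (sv_nonneg M 0) (NN_nonneg z)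
  · have key : NN y ^ 2 = (M *ᵥ y) ⬝ᵥ z := by
      rw [NN_sq]
      calc y ⬝ᵥ y = y ⬝ᵥ (Mᵀ *ᵥ z) := by rw [← hy]
        _ = (y ᵥ* Mᵀ) ⬝ᵥ z := by rw [dotProduct_mulVec]
        _ = (M *ᵥ y) ⬝ᵥ z := by rw [vecMul_transpose]
    have h1 : NN y ^ 2 ≤ NN (M *ᵥ y) * NN z := key ▸ dot_le_NN _ _
    have h2 : NN (M *ᵥ y) ≤ sv M 0 * NN y := NN_mulVec_le M y
    have h3 : NN y ^ 2 ≤ sv M 0 * NN y * NN z :=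
      h1.trans (mul_le_mul_of_nonneg_right h2 (NN_nonneg z))
    have h4 : 0 < NN y := lt_of_le_of_ne (NN_nonneg y) (Ne.symm h0)
    nlinarith

lemma NN_diag_le {k : ℕ} (d : Fin k → ℝ) (Λ : ℝ) (hΛ : 0 ≤ Λ)
    (hd : ∀ j, 0 ≤ d j ∧ d j ≤ Λ) (w : Fin k → ℝ) :
    NN ((Matrix.diagonal d) *ᵥ w) ≤ Λ * NN w := by
  refine le_NN_of_sq (mul_nonneg hΛ (NN_nonneg w)) ?_
  rw [mul_pow, NN_sq]
  simp only [dotProduct, Matrix.mulVec_diagonal, Finset.mul_sum]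
  refine Finset.sum_le_sum fun j _ => ?_
  have h1 : d j * w j * (d j * w j) = d j ^ 2 * (w j * w j) := by ring
  rw [h1]
  have h2 : d j ^ 2 ≤ Λ ^ 2 := pow_le_pow_left₀ (hd j).1 (hd j).2 2
  nlinarith [mul_self_nonneg (w j)]

lemma exists_top (hb : 0 < b) :
    ∃ u : Fin b → ℝ, u ⬝ᵥ u = 1 ∧ (M *ᵥ u) ⬝ᵥ (M *ᵥ u) = sv M 0 ^ 2 := by
  obtain ⟨u, hu, heig⟩ := exists_unit_eig_sv0 M hb
  refine ⟨u, hu, ?_⟩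
  rw [gram_dot, heig, dotProduct_smul, hu]
  simp

lemma exists_bot_transpose {k : ℕ} (C : Matrix (Fin k) (Fin k) ℝ) (hk : 0 < k) :
    ∃ u : Fin k → ℝ, u ⬝ᵥ u = 1 ∧ (Cᵀ *ᵥ u) ⬝ᵥ (Cᵀ *ᵥ u) ≤ sv C (k - 1) ^ 2 := by
  obtain ⟨w, hw, heig⟩ := exists_unit_eig_svlast C hk
  set lam0 := sv C (k - 1) ^ 2 with hlam0
  have hlamnn : 0 ≤ lam0 := sq_nonneg _
  set p := C *ᵥ w with hp
  have hpp : p ⬝ᵥ p = lam0 := by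
    rw [hp, gram_dot, heig, dotProduct_smul, hw]
    simp
  rcases eq_or_ne p 0 with hp0 | hp0
  · -- lam0 = 0 and C is singular
    have hl0 : lam0 = 0 := by rw [← hpp, hp0]; simp
    have hw0 : w ≠ 0 := by
      intro h; rw [h] at hw; simp at hw
    have hdet : C.det = 0 := (Matrix.exists_mulVec_eq_zero_iff).mp ⟨w, hw0, hp0 ▸ hp.symm⟩
    have hdetT : Cᵀ.det = 0 := by rw [Matrix.det_transpose]; exact hdet
    obtain ⟨v, hv0, hv⟩ := (Matrix.exists_mulVec_eq_zero_iff).mpr hdetT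
    have hvv : 0 < v ⬝ᵥ v := by
      rcases lt_or_eq_of_le (dot_self_nonneg v) with h | h
      · exact h
      · exact absurd (dotProduct_self_eq_zero.mp h.symm) hv0
    refine ⟨(Real.sqrt (v ⬝ᵥ v))⁻¹ • v, ?_, ?_⟩
    · rw [smul_dotProduct, dotProduct_smul]
      rw [smul_eq_mul, smul_eq_mul, ← mul_assoc]
      rw [← Real.sqrt_mul_self (le_of_lt hvv)]
      field_simp
      rw [Real.sq_sqrt (Real.sqrt_nonneg _)]
    · rw [Matrix.mulVec_smul, hv]
      simp [hlamnn]
  · have hppne : p ⬝ᵥ p ≠ 0 := fun h => hp0 (dotProduct_self_eq_zero.mp h)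
    have hlpos : 0 < lam0 := lt_of_le_of_ne hlamnn (by rw [← hpp] at *; exact Ne.symm hppne)
    have hCp : Cᵀ *ᵥ p = lam0 • w := by
      rw [hp, Matrix.mulVec_mulVec, heig]
    refine ⟨(Real.sqrt lam0)⁻¹ • p, ?_, ?_⟩
    · rw [smul_dotProduct, dotProduct_smul, hpp]
      rw [smul_eq_mul, smul_eq_mul, ← mul_assoc]
      rw [← Real.sqrt_mul_self hlamnn]
      field_simp
      rw [Real.sq_sqrt (Real.sqrt_nonneg _)]
    · rw [Matrix.mulVec_smul, hCp]
      rw [smul_smul, smul_dotProduct, dotProduct_smul, hw]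
      rw [smul_eq_mul, smul_eq_mul]
      rw [show ((√lam0)⁻¹ * lam0 * ((√lam0)⁻¹ * lam0 * 1)) = ((√lam0)⁻¹ * (√lam0)⁻¹) * (lam0 * lam0) by ring]
      rw [← Real.sqrt_mul_self hlamnn]
      have hs : (0:ℝ) < Real.sqrt lam0 := Real.sqrt_pos.mpr hlpos
      field_simp
      exact le_of_eq (by rw [Real.sq_sqrt (Real.sqrt_nonneg _)])

end spectral
end CZ

open CZ

/-- Cai–Zhang unbalanced SVD perturbation bound: with
`V̂ᵣ` the top-`r` right singular vectors of `Y` (first `r` columns of an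
orthogonal eigenbasis `W` of `YᵀY` ordered by decreasing eigenvalue),
`[Vᵣ V⊥]` any orthogonal matrix, and `P` the orthogonal projection onto the
column space of `Y Vᵣ`, if `σᵣ(Y Vᵣ) > σ_{r+1}(Y)` then
`‖sinΘ(Vᵣ, V̂ᵣ)‖ ≤ min{σᵣ(Y Vᵣ) ‖P Y V⊥‖ / (σᵣ²(Y Vᵣ) - σ_{r+1}²(Y)), 1}`. -/
theorem unbalanced_svd_perturbation {m n r : ℕ} (hr1 : 1 ≤ r) (hr : r ≤ n)
    (Y : Matrix (Fin m) (Fin n) ℝ)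
    (Vr : Matrix (Fin n) (Fin r) ℝ) (Vperp : Matrix (Fin n) (Fin (n - r)) ℝ)
    (hVr : Vrᵀ * Vr = 1) (hVp : Vperpᵀ * Vperp = 1) (hVo : Vrᵀ * Vperp = 0)
    (hVfull : Vr * Vrᵀ + Vperp * Vperpᵀ = 1)
    (W : Matrix (Fin n) (Fin n) ℝ) (hW : Wᵀ * W = 1)
    (hGram : Yᵀ * Y * W = W * Matrix.diagonal (fun i : Fin n => sv Y (i : ℕ) ^ 2))
    (P : Matrix (Fin m) (Fin m) ℝ) (hPsym : Pᵀ = P) (hPidem : P * P = P)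
    (hPfix : P * (Y * Vr) = Y * Vr)
    (hPrange : ∃ C : Matrix (Fin r) (Fin m) ℝ, P = Y * Vr * C)
    (hgap : sv Y r < sv (Y * Vr) (r - 1)) :
    sinThetaOp Vr (W.submatrix id (Fin.castLE hr)) ≤
      min (sv (Y * Vr) (r - 1) * sv (P * (Y * Vperp)) 0 /
            (sv (Y * Vr) (r - 1) ^ 2 - sv Y r ^ 2)) 1 := by
  classical
  set Z := Y * Vr with hZ
  set σ := sv Z (r - 1) with hσ
  clear_value σ
  set lamY := sv Y r with hlamY
  clear_value lamY
  set t := sv (P * (Y * Vperp)) 0 with ht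
  clear_value t
  have hlamnn : 0 ≤ lamY := by rw [hlamY]; exact sv_nonneg Y r
  have hσ0 : 0 < σ := lt_of_le_of_lt hlamnn hgap
  have htnn : 0 ≤ t := by rw [ht]; exact sv_nonneg _ 0
  have hgap2 : lamY ^ 2 < σ ^ 2 := by
    have h := mul_self_lt_mul_self hlamnn hgap
    rw [pow_two, pow_two]; exact h
  set B := Zᵀ * Z with hB
  set Wr := W.submatrix id (Fin.castLE hr) with hWr
  set emb : Fin (n - r) → Fin n := fun j => ⟨r + j.1, by omega⟩ with hemb
  set Wp := W.submatrix id emb with hWp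
  set C := Vrᵀ * Wr with hC
  set X := Wpᵀ * Vr with hX
  set S := sv X 0 with hS
  clear_value S
  set D2 := Matrix.diagonal (fun j : Fin (n - r) => sv Y (r + j.1) ^ 2) with hD2
  set E := Wpᵀ * (Vperp * ((P * (Y * Vperp))ᵀ * Z)) with hE
  have hWWt : W * Wᵀ = 1 := mul_eq_one_comm.mp hW
  -- sum splitting
  have hsplit : ∀ v : Fin n → ℝ, (Wᵀ *ᵥ v) ⬝ᵥ (Wᵀ *ᵥ v) =
      (Wrᵀ *ᵥ v) ⬝ᵥ (Wrᵀ *ᵥ v) + (Wpᵀ *ᵥ v) ⬝ᵥ (Wpᵀ *ᵥ v) := by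
    intro v
    have hnr : r + (n - r) = n := by omega
    set e : Fin r ⊕ Fin (n - r) ≃ Fin n := finSumFinEquiv.trans (finCongr hnr) with he
    have he1 : ∀ j : Fin r, e (Sum.inl j) = Fin.castLE hr j := by
      intro j; apply Fin.ext; simp [e]
    have he2 : ∀ j : Fin (n - r), e (Sum.inr j) = emb j := by
      intro j; apply Fin.ext; simp [e, emb]
    have hWr_app : ∀ j : Fin r, (Wᵀ *ᵥ v) (e (Sum.inl j)) = (Wrᵀ *ᵥ v) j := by
      intro j; rw [he1 j]; simp [Matrix.mulVec, dotProduct, Wr]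
    have hWp_app : ∀ j : Fin (n - r), (Wᵀ *ᵥ v) (e (Sum.inr j)) = (Wpᵀ *ᵥ v) j := by
      intro j; rw [he2 j]; simp [Matrix.mulVec, dotProduct, Wp]
    calc (Wᵀ *ᵥ v) ⬝ᵥ (Wᵀ *ᵥ v)
        = ∑ i : Fin n, (Wᵀ *ᵥ v) i * (Wᵀ *ᵥ v) i := rfl
      _ = ∑ x : Fin r ⊕ Fin (n - r), (Wᵀ *ᵥ v) (e x) * (Wᵀ *ᵥ v) (e x) :=
          (Fintype.sum_equiv e _ _ (fun x => rfl)).symm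
      _ = (∑ j : Fin r, (Wᵀ *ᵥ v) (e (Sum.inl j)) * (Wᵀ *ᵥ v) (e (Sum.inl j))) +
          (∑ j : Fin (n - r), (Wᵀ *ᵥ v) (e (Sum.inr j)) * (Wᵀ *ᵥ v) (e (Sum.inr j))) :=
          Fintype.sum_sum_type _
      _ = (Wrᵀ *ᵥ v) ⬝ᵥ (Wrᵀ *ᵥ v) + (Wpᵀ *ᵥ v) ⬝ᵥ (Wpᵀ *ᵥ v) := by
          simp only [hWr_app, hWp_app, dotProduct]
  -- contraction through Wp
  have hWp_contr : ∀ w : Fin n → ℝ, NN (Wpᵀ *ᵥ w) ≤ NN w := by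
    intro w
    refine le_NN_of_sq (NN_nonneg w) ?_
    rw [NN_sq]
    have h1 := hsplit w
    have h2 : (Wᵀ *ᵥ w) ⬝ᵥ (Wᵀ *ᵥ w) = w ⬝ᵥ w := by
      rw [gram_dot, Matrix.transpose_transpose, hWWt, one_mulVec]
    linarith only [h1, h2, dot_self_nonneg (Wrᵀ *ᵥ w)]
  -- Sylvester identity
  have hPY : P * Y = Z * Vrᵀ + (P * (Y * Vperp)) * Vperpᵀ := by
    calc P * Y = (P * Y) * (Vr * Vrᵀ + Vperp * Vperpᵀ) := by rw [hVfull, Matrix.mul_one]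
      _ = (P * Y) * (Vr * Vrᵀ) + (P * Y) * (Vperp * Vperpᵀ) := by rw [Matrix.mul_add]
      _ = (P * (Y * Vr)) * Vrᵀ + (P * (Y * Vperp)) * Vperpᵀ := by
          rw [← Matrix.mul_assoc, ← Matrix.mul_assoc, Matrix.mul_assoc P Y Vr,
            Matrix.mul_assoc P Y Vperp]
      _ = Z * Vrᵀ + (P * (Y * Vperp)) * Vperpᵀ := by rw [← hZ, hPfix]
  have hYtYVr : Yᵀ * Y * Vr = Vr * B + Vperp * ((P * (Y * Vperp))ᵀ * Z) := by
    calc Yᵀ * Y * Vr = Yᵀ * Z := by rw [Matrix.mul_assoc, ← hZ]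
      _ = Yᵀ * (P * Z) := by rw [hPfix]
      _ = (Yᵀ * Pᵀ) * Z := by rw [hPsym, Matrix.mul_assoc]
      _ = (P * Y)ᵀ * Z := by rw [← Matrix.transpose_mul]
      _ = (Z * Vrᵀ + (P * (Y * Vperp)) * Vperpᵀ)ᵀ * Z := by rw [hPY]
      _ = (Vr * Zᵀ + Vperp * (P * (Y * Vperp))ᵀ) * Z := by
          have hq : (P * (Y * Vperp) * Vperpᵀ)ᵀ = Vperp * (P * (Y * Vperp))ᵀ := by
            rw [Matrix.transpose_mul, Matrix.transpose_transpose]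
          have hz : (Z * Vrᵀ)ᵀ = Vr * Zᵀ := by
            rw [Matrix.transpose_mul, Matrix.transpose_transpose]
          rw [Matrix.transpose_add, hq, hz]
      _ = Vr * B + Vperp * ((P * (Y * Vperp))ᵀ * Z) := by
          rw [Matrix.add_mul, Matrix.mul_assoc, Matrix.mul_assoc]
  have hWpD : (Yᵀ * Y) * Wp = Wp * D2 := by
    ext i j
    have hcol := congrFun (congrFun hGram i) (emb j)
    calc ((Yᵀ * Y) * Wp) i j = (Yᵀ * Y * W) i (emb j) := by
          simp [Matrix.mul_apply, Wp]
      _ = (W * Matrix.diagonal (fun i : Fin n => sv Y (i : ℕ) ^ 2)) i (emb j) := hcol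
      _ = W i (emb j) * sv Y ((emb j : Fin n) : ℕ) ^ 2 := by rw [Matrix.mul_diagonal]
      _ = (Wp * D2) i j := by
          rw [Matrix.mul_diagonal]
          simp [Wp, emb]
  have hWpT : Wpᵀ * (Yᵀ * Y) = D2 * Wpᵀ := by
    have hsymYtY : (Yᵀ * Y)ᵀ = Yᵀ * Y := by
      rw [Matrix.transpose_mul, Matrix.transpose_transpose]
    calc Wpᵀ * (Yᵀ * Y) = Wpᵀ * (Yᵀ * Y)ᵀ := by rw [hsymYtY]
      _ = ((Yᵀ * Y) * Wp)ᵀ := by rw [Matrix.transpose_mul (Yᵀ * Y) Wp]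
      _ = (Wp * D2)ᵀ := by rw [hWpD]
      _ = D2ᵀ * Wpᵀ := by rw [Matrix.transpose_mul]
      _ = D2 * Wpᵀ := by rw [Matrix.diagonal_transpose]
  have hsylv : D2 * X = X * B + E := by
    calc D2 * X = (D2 * Wpᵀ) * Vr := by rw [hX, Matrix.mul_assoc]
      _ = (Wpᵀ * (Yᵀ * Y)) * Vr := by rw [← hWpT]
      _ = Wpᵀ * (Yᵀ * Y * Vr) := by rw [Matrix.mul_assoc]
      _ = Wpᵀ * (Vr * B + Vperp * ((P * (Y * Vperp))ᵀ * Z)) := by rw [hYtYVr]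
      _ = Wpᵀ * (Vr * B) + E := by rw [Matrix.mul_add]
      _ = X * B + E := by rw [hX, Matrix.mul_assoc]
  -- Part 2 : S ≤ σ * t / (σ² - lamY²)
  have hpart2 : S ≤ σ * t / (σ ^ 2 - lamY ^ 2) := by
    obtain ⟨u0, hu0, hXu0⟩ := exists_top X (by omega : 0 < r)
    have hBdet : IsUnit B.det := by
      rcases eq_or_ne B.det 0 with h | h
      · exfalso
        obtain ⟨x, hx0, hBx⟩ := (Matrix.exists_mulVec_eq_zero_iff).mpr h
        have h1 := rayleigh_ge Z x
        rw [← hσ] at h1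
        have h2 : (Z *ᵥ x) ⬝ᵥ (Z *ᵥ x) = x ⬝ᵥ (B *ᵥ x) := gram_dot Z x
        rw [hBx, dotProduct_zero] at h2
        have hxx : 0 < x ⬝ᵥ x := by
          rcases lt_or_eq_of_le (dot_self_nonneg x) with hh | hh
          · exact hh
          · exact absurd (dotProduct_self_eq_zero.mp hh.symm) hx0
        rw [h2] at h1
        have hp : 0 < σ ^ 2 * (x ⬝ᵥ x) := mul_pos (pow_pos hσ0 2) hxx
        exact absurd h1 (not_le.mpr hp)
      · exact isUnit_iff_ne_zero.mpr h
    obtain ⟨y, hBy⟩ : ∃ y : Fin r → ℝ, B *ᵥ y = u0 :=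
      ⟨B⁻¹ *ᵥ u0, by rw [Matrix.mulVec_mulVec, Matrix.mul_nonsing_inv _ hBdet, one_mulVec]⟩
    have hNu0 : NN u0 = 1 := by unfold NN; rw [hu0, Real.sqrt_one]
    have hyu : y ⬝ᵥ u0 ≤ NN y := by
      have h := dot_le_NN y u0
      rwa [hNu0, mul_one] at h
    have hZy2 : (Z *ᵥ y) ⬝ᵥ (Z *ᵥ y) = y ⬝ᵥ u0 := by rw [gram_dot, ← hB, hBy]
    have hNy : NN y ≤ σ⁻¹ * σ⁻¹ := by
      rcases eq_or_ne (NN y) 0 with h0 | h0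
      · rw [h0]; positivity
      · have h1 : σ ^ 2 * (NN y) ^ 2 ≤ NN y := by
          rw [NN_sq]
          have hray := rayleigh_ge Z y
          rw [← hσ] at hray
          calc σ ^ 2 * (y ⬝ᵥ y) ≤ (Z *ᵥ y) ⬝ᵥ (Z *ᵥ y) := hray
            _ = y ⬝ᵥ u0 := hZy2
            _ ≤ NN y := hyu
        have h4 : 0 < NN y := lt_of_le_of_ne (NN_nonneg y) (Ne.symm h0)
        have h5 : σ ^ 2 * NN y ≤ 1 := by
          have h1' : (σ ^ 2 * NN y) * NN y ≤ 1 * NN y := by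
            rw [one_mul]
            calc (σ ^ 2 * NN y) * NN y = σ ^ 2 * NN y ^ 2 := by ring
              _ ≤ NN y := h1
          exact le_of_mul_le_mul_right h1' h4
        have h6 : NN y * σ ^ 2 ≤ 1 := by linarith only [h5]
        have h7 : NN y ≤ 1 / σ ^ 2 := (le_div_iff₀ (pow_pos hσ0 2)).mpr h6
        calc NN y ≤ 1 / σ ^ 2 := h7
          _ = σ⁻¹ * σ⁻¹ := by rw [pow_two, one_div, mul_inv]
    have hNZy : NN (Z *ᵥ y) ≤ σ⁻¹ := by
      refine le_NN_of_sq (by positivity) ?_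
      rw [hZy2]
      calc y ⬝ᵥ u0 ≤ NN y := hyu
        _ ≤ σ⁻¹ * σ⁻¹ := hNy
        _ = σ⁻¹ ^ 2 := (pow_two _).symm
    have hkey : X *ᵥ u0 = D2 *ᵥ (X *ᵥ y) - E *ᵥ y := by
      have h2 : X * B = D2 * X - E := eq_sub_of_add_eq hsylv.symm
      calc X *ᵥ u0 = X *ᵥ (B *ᵥ y) := by rw [hBy]
        _ = (X * B) *ᵥ y := by rw [Matrix.mulVec_mulVec]
        _ = (D2 * X - E) *ᵥ y := by rw [h2]
        _ = (D2 * X) *ᵥ y - E *ᵥ y := by rw [Matrix.sub_mulVec]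
        _ = D2 *ᵥ (X *ᵥ y) - E *ᵥ y := by rw [← Matrix.mulVec_mulVec]
    have hSnn : 0 ≤ S := by rw [hS]; exact sv_nonneg X 0
    have hS_eq : NN (X *ᵥ u0) = S := by
      unfold NN; rw [hXu0, ← hS]; exact Real.sqrt_sq hSnn
    have hNXy : NN (X *ᵥ y) ≤ S * NN y := by
      have h := NN_mulVec_le X y
      rwa [← hS] at h
    have hND2 : NN (D2 *ᵥ (X *ᵥ y)) ≤ lamY ^ 2 * NN (X *ᵥ y) := by
      refine NN_diag_le _ _ (sq_nonneg _) (fun j => ⟨sq_nonneg _, ?_⟩) _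
      have hmono : sv Y (r + j.1) ≤ lamY := by
        rw [hlamY]; exact sv_anti Y (Nat.le_add_right r j.1)
      exact pow_le_pow_left₀ (sv_nonneg Y _) hmono 2
    have hNE : NN (E *ᵥ y) ≤ t * σ⁻¹ := by
      have hEy : E *ᵥ y = Wpᵀ *ᵥ (Vperp *ᵥ ((P * (Y * Vperp))ᵀ *ᵥ (Z *ᵥ y))) := by
        rw [hE]
        rw [← Matrix.mulVec_mulVec, ← Matrix.mulVec_mulVec, ← Matrix.mulVec_mulVec]
      rw [hEy]
      have hVperp_iso : ∀ q : Fin (n - r) → ℝ, NN (Vperp *ᵥ q) = NN q := by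
        intro q; unfold NN; rw [isometry_dot hVp]
      calc NN (Wpᵀ *ᵥ (Vperp *ᵥ ((P * (Y * Vperp))ᵀ *ᵥ (Z *ᵥ y))))
          ≤ NN (Vperp *ᵥ ((P * (Y * Vperp))ᵀ *ᵥ (Z *ᵥ y))) := hWp_contr _
        _ = NN ((P * (Y * Vperp))ᵀ *ᵥ (Z *ᵥ y)) := hVperp_iso _
        _ ≤ t * NN (Z *ᵥ y) := by
            have h := NN_transpose_mulVec_le (P * (Y * Vperp)) (Z *ᵥ y)
            rwa [← ht] at h
        _ ≤ t * σ⁻¹ := mul_le_mul_of_nonneg_left hNZy htnn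
    have htot : S ≤ lamY ^ 2 * (S * (σ⁻¹ * σ⁻¹)) + t * σ⁻¹ := by
      calc S = NN (X *ᵥ u0) := hS_eq.symm
        _ = NN (D2 *ᵥ (X *ᵥ y) - E *ᵥ y) := by rw [hkey]
        _ ≤ NN (D2 *ᵥ (X *ᵥ y)) + NN (E *ᵥ y) := NN_sub_le _ _
        _ ≤ lamY ^ 2 * NN (X *ᵥ y) + t * σ⁻¹ := add_le_add hND2 hNE
        _ ≤ lamY ^ 2 * (S * NN y) + t * σ⁻¹ := by
            have := mul_le_mul_of_nonneg_left hNXy (sq_nonneg lamY)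
            linarith only [this]
        _ ≤ lamY ^ 2 * (S * (σ⁻¹ * σ⁻¹)) + t * σ⁻¹ := by
            have h := mul_le_mul_of_nonneg_left hNy hSnn
            have := mul_le_mul_of_nonneg_left h (sq_nonneg lamY)
            linarith only [this]
    rw [le_div_iff₀ (by linarith only [hgap2] : (0:ℝ) < σ ^ 2 - lamY ^ 2)]
    have hσne : σ ≠ 0 := ne_of_gt hσ0
    have hmul := mul_le_mul_of_nonneg_right htot (le_of_lt (by positivity : (0:ℝ) < σ ^ 2))
    have hexp : (lamY ^ 2 * (S * (σ⁻¹ * σ⁻¹)) + t * σ⁻¹) * σ ^ 2 = lamY ^ 2 * S + t * σ := by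
      field_simp
    rw [hexp] at hmul
    linarith only [hmul]
  -- Part 1 : sinΘ ≤ S
  have hpart1 : Real.sqrt (1 - sv C (r - 1) ^ 2) ≤ S := by
    obtain ⟨u, hu, hCu⟩ := exists_bot_transpose C (by omega : 0 < r)
    set v := Vr *ᵥ u with hv
    have hvv : v ⬝ᵥ v = 1 := by rw [hv, isometry_dot hVr, hu]
    have hWv : (Wᵀ *ᵥ v) ⬝ᵥ (Wᵀ *ᵥ v) = 1 := by
      rw [gram_dot, Matrix.transpose_transpose, hWWt, one_mulVec, hvv]
    have hWrv : Wrᵀ *ᵥ v = Cᵀ *ᵥ u := by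
      rw [hC, Matrix.transpose_mul, Matrix.transpose_transpose, hv,
        Matrix.mulVec_mulVec]
    have hXv : Wpᵀ *ᵥ v = X *ᵥ u := by
      rw [hX, hv, Matrix.mulVec_mulVec]
    have h1 := hsplit v
    rw [hWv, hWrv, hXv] at h1
    have h2 : 1 - sv C (r - 1) ^ 2 ≤ (X *ᵥ u) ⬝ᵥ (X *ᵥ u) := by
      linarith only [h1, hCu]
    have h3 : (X *ᵥ u) ⬝ᵥ (X *ᵥ u) ≤ S ^ 2 := by
      have h := rayleigh_le X u
      rw [hu, mul_one, ← hS] at h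
      exact h
    calc Real.sqrt (1 - sv C (r - 1) ^ 2) ≤ Real.sqrt (S ^ 2) :=
        Real.sqrt_le_sqrt (by linarith only [h2, h3])
      _ = S := Real.sqrt_sq (by rw [hS]; exact sv_nonneg X 0)
  -- conclude
  have hgoal : sinThetaOp Vr Wr = Real.sqrt (1 - sv C (r - 1) ^ 2) := by
    simp only [sinThetaOp]
    rfl
  rw [hgoal]
  refine le_min (hpart1.trans hpart2) ?_
  refine Real.sqrt_le_one.mpr ?_
  linarith only [sq_nonneg (sv C (r - 1))]
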